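/- Let X, Xَ_1, ..., X_n, X_{n+1} be i.i.d. with a density, x ∈ ℝ^d, and 1 ≤ k_{n+1} ≤ n. Then the identity E(‖X−x‖_{(k_{n+1},n)} · F_{‖X−x‖}(‖X−x‖_{(k_{n+1},n)})) = (k_{n+1}/(n+1)) · E(‖X−x‖_{(k_{n+1}+1, n+1)}) holds, where ‖X−x‖_{(k,m)} is the k-th order statistic of a sample of size m of ‖X−x‖. -/

import Mathlib

/-!
Put `Y i = ‖X i - x‖`: these are i.i.d. with law `ν` and cdf `F`, and for `d ≥ 1` the law `ν` has
no atoms because spheres are Lebesgue-null (for `d = 0` every `Y i` vanishes). Let `g = Y_(k,n)`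
and `G = Y_(k+1,n+1)`. Since `Y (n+1)` is independent of `g`, `E[g F(g)] = E[g; Y (n+1) ≤ g]`.
On that event `Y (n+1)` is among the `k` smallest of `Y 1, …, Y (n+1)`, i.e. its rank is `< k`,
and inserting it leaves the order statistic unchanged: `g = G`. Hence
`E[g F(g)] = E[G; rank (n+1) < k]`. By exchangeability the right side does not depend on which
index's rank is tested, and without ties exactly `k` of the `n+1` ranks are `< k`; summing over
the indices gives `(n+1) E[g F(g)] = k E[G]`.

The computation is carried out for lower Lebesgue integrals on `ℕ → ℝ` with the product measure,
so it also covers `E[G] = ∞`, where both Bochner integrals of the theorem are `0`.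
-/

open MeasureTheory ProbabilityTheory

/-- The `k`-th order statistic of the family `(v i)_{i ∈ s}` : the smallest `t` such that at
least `k` of the values `v i`, `i ∈ s`, are `≤ t`. -/
noncomputable def orderStat (s : Finset ℕ) (v : ℕ → ℝ) (k : ℕ) : ℝ :=
  sInf {t : ℝ | k ≤ (s.filter (fun i => v i ≤ t)).card}

open Finset
open scoped ENNReal

section OrderStat

variable {s : Finset ℕ} {v : ℕ → ℝ} {k : ℕ} {t : ℝ}

lemma isClosed_setOf_le_card_filter_le (s : Finset ℕ) (v : ℕ → ℝ) (k : ℕ) :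
    IsClosed {t : ℝ | k ≤ #{i ∈ s | v i ≤ t}} := by
  have : {t : ℝ | k ≤ #{i ∈ s | v i ≤ t}} = ⋃ T ∈ s.powersetCard k, ⋂ i ∈ T, Set.Ici (v i) := by
    ext t
    simp only [Set.mem_ofPred_eq, Set.mem_iUnion, Set.mem_iInter, Set.mem_Ici, mem_powersetCard,
      exists_prop]
    constructor
    · intro h
      obtain ⟨T, hT, rfl⟩ := exists_subset_card_eq h
      exact ⟨T, ⟨hT.trans (filter_subset _ _), rfl⟩, fun i hi => (mem_filter.1 (hT hi)).2⟩
    · rintro ⟨T, ⟨hTs, rfl⟩, hT⟩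
      exact card_le_card fun i hi => mem_filter.2 ⟨hTs hi, hT i hi⟩
  rw [this]
  exact isClosed_biUnion_finset fun T _ => isClosed_biInter fun i _ => isClosed_Ici

lemma orderStat_le_iff (hk : 1 ≤ k) (hks : k ≤ #s) :
    orderStat s v k ≤ t ↔ k ≤ #{i ∈ s | v i ≤ t} := by
  have hs : s.Nonempty := card_pos.1 (hk.trans hks)
  have hne : {t : ℝ | k ≤ #{i ∈ s | v i ≤ t}}.Nonempty :=
    ⟨s.sup' hs v, by rwa [Set.mem_ofPred_eq, filter_true_of_mem fun i hi => le_sup' v hi]⟩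
  have hbdd : BddBelow {t : ℝ | k ≤ #{i ∈ s | v i ≤ t}} := by
    refine ⟨s.inf' hs v, fun u hu => ?_⟩
    obtain ⟨i, hi⟩ := card_pos.1 (hk.trans hu)
    exact (inf'_le v (mem_filter.1 hi).1).trans (mem_filter.1 hi).2
  refine ⟨fun h => ?_, fun h => csInf_le hbdd h⟩
  have hmem := (isClosed_setOf_le_card_filter_le s v k).csInf_mem hne hbdd
  exact hmem.trans (card_le_card (monotone_filter_right s fun i _ hi => hi.trans h))

lemma orderStat_lt_iff (hk : 1 ≤ k) (hks : k ≤ #s) :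
    orderStat s v k < t ↔ k ≤ #{i ∈ s | v i < t} := by
  constructor
  · intro h
    obtain ⟨u, hu, hut⟩ := exists_between h
    exact ((orderStat_le_iff hk hks).1 hu.le).trans
      (card_le_card (monotone_filter_right s fun i _ hi => hi.trans_lt hut))
  · intro h
    have hB : {i ∈ s | v i < t}.Nonempty := card_pos.1 (hk.trans h)
    obtain ⟨j, hj, hjmax⟩ := exists_mem_eq_sup' hB v
    refine lt_of_le_of_lt ((orderStat_le_iff hk hks).2 (h.trans (card_le_card fun i hi => ?_)))
      (hjmax ▸ (mem_filter.1 hj).2)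
    exact mem_filter.2 ⟨(mem_filter.1 hi).1, hjmax ▸ le_sup' v hi⟩

lemma le_orderStat_iff (hk : 1 ≤ k) (hks : k ≤ #s) :
    t ≤ orderStat s v k ↔ #{i ∈ s | v i < t} < k := by
  rw [← not_lt, orderStat_lt_iff hk hks, not_le]

lemma orderStat_nonneg (hk : 1 ≤ k) (hks : k ≤ #s) (hv : ∀ i ∈ s, 0 ≤ v i) :
    0 ≤ orderStat s v k := by
  rw [le_orderStat_iff hk hks, filter_false_of_mem fun i hi => (hv i hi).not_gt, card_empty]
  exact hk

lemma orderStat_const (c : ℝ) (hk : 1 ≤ k) (hks : k ≤ #s) : orderStat s (fun _ => c) k = c :=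
  le_antisymm ((orderStat_le_iff hk hks).2 (by rwa [filter_true_of_mem fun _ _ => le_rfl]))
    ((le_orderStat_iff hk hks).2 (by rwa [filter_false_of_mem fun _ _ => lt_irrefl c, card_empty]))

lemma orderStat_insert {j : ℕ} (hj : j ∉ s) (hk : 1 ≤ k) (hks : k ≤ #s)
    (hle : v j ≤ orderStat s v k) :
    orderStat (insert j s) v (k + 1) = orderStat s v k := by
  unfold orderStat
  congr 1
  ext t
  simp only [Set.mem_ofPred_eq, filter_insert]
  split_ifs with hjt
  · rw [card_insert_of_notMem fun h => hj (mem_filter.1 h).1, Nat.add_le_add_iff_right]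
  · have hlt : ¬ k ≤ #{i ∈ s | v i ≤ t} := fun h =>
      hjt (hle.trans ((orderStat_le_iff hk hks).2 h))
    exact iff_of_false (fun h => hlt (by omega)) hlt

lemma card_filter_comp_equiv (p : ℕ → Prop) [DecidablePred p] {e : ℕ ≃ ℕ}
    (he : ∀ i, e i ∈ s ↔ i ∈ s) : #{i ∈ s | p (e i)} = #{i ∈ s | p i} :=
  card_nbij' e e.symm (fun i hi => by simp_all) (fun i hi => by have := he (e.symm i); simp_all)
    (fun i _ => by simp) (fun i _ => by simp)

lemma orderStat_comp_equiv {e : ℕ ≃ ℕ} (he : ∀ i, e i ∈ s ↔ i ∈ s) :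
    orderStat s (v ∘ e) k = orderStat s v k := by
  unfold orderStat
  congr 1
  ext t
  exact iff_of_eq (congrArg (k ≤ ·) (card_filter_comp_equiv (fun i => v i ≤ t) he))

end OrderStat

noncomputable def sampleRank (s : Finset ℕ) (v : ℕ → ℝ) (j : ℕ) : ℕ := #{i ∈ s | v i < v j}

section SampleRank

variable {s : Finset ℕ} {v : ℕ → ℝ}

lemma sampleRank_comp_equiv {e : ℕ ≃ ℕ} (he : ∀ i, e i ∈ s ↔ i ∈ s) (j : ℕ) :
    sampleRank s (v ∘ e) j = sampleRank s v (e j) :=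
  card_filter_comp_equiv (fun i => v i < v (e j)) he

lemma sampleRank_lt_sampleRank {j j' : ℕ} (hj : j ∈ s) (h : v j < v j') :
    sampleRank s v j < sampleRank s v j' :=
  card_lt_card <| (ssubset_iff_of_subset (monotone_filter_right s fun _ _ hi => hi.trans h)).2
    ⟨j, mem_filter.2 ⟨hj, h⟩, fun hj' => (mem_filter.1 hj').2.false⟩

lemma injOn_sampleRank (hv : Set.InjOn v s) : Set.InjOn (sampleRank s v) s := by
  intro j hj j' hj' hr
  rcases lt_trichotomy (v j) (v j') with h | h | h
  · exact absurd hr (sampleRank_lt_sampleRank hj h).ne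
  · exact hv hj hj' h
  · exact absurd hr (sampleRank_lt_sampleRank hj' h).ne'

lemma image_sampleRank (hv : Set.InjOn v s) : s.image (sampleRank s v) = range #s := by
  refine eq_of_subset_of_card_le (fun r hr => ?_)
    (by rw [card_range, card_image_of_injOn (injOn_sampleRank hv)])
  obtain ⟨j, hj, rfl⟩ := mem_image.1 hr
  refine mem_range.2 ((card_le_card fun i hi => ?_).trans_lt (card_erase_lt_of_mem hj))
  exact mem_erase.2 ⟨fun h => (h ▸ (mem_filter.1 hi).2).false, (mem_filter.1 hi).1⟩

lemma card_filter_sampleRank_lt (hv : Set.InjOn v s) {k : ℕ} (hks : k ≤ #s) :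
    #{j ∈ s | sampleRank s v j < k} = k := by
  rw [← card_image_of_injOn ((injOn_sampleRank hv).mono (filter_subset _ s)),
    ← filter_image (p := (· < k)), image_sampleRank hv,
    show (range #s).filter (· < k) = range k by ext; simp; omega, card_range]

end SampleRank

section Measurability

variable {α : Type*} [MeasurableSpace α] {s : Finset ℕ} {v : ℕ → α → ℝ}

lemma measurable_card_filter {p : ℕ → α → Prop} [∀ i a, Decidable (p i a)]
    (hp : ∀ i ∈ s, MeasurableSet {a | p i a}) : Measurable fun a => #{i ∈ s | p i a} := by
  simp only [card_filter]
  exact Finset.measurable_sum _ fun i hi => Measurable.ite (hp i hi) measurable_const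
    measurable_const

lemma measurable_orderStat {k : ℕ} (hk : 1 ≤ k) (hks : k ≤ #s)
    (hv : ∀ i ∈ s, Measurable (v i)) : Measurable fun a => orderStat s (fun i => v i a) k := by
  refine measurable_of_Iic fun t => ?_
  have : (fun a => orderStat s (fun i => v i a) k) ⁻¹' Set.Iic t
      = {a | k ≤ #{i ∈ s | v i a ≤ t}} :=
    Set.ext fun a => orderStat_le_iff hk hks
  rw [this]
  exact measurableSet_le measurable_const
    (measurable_card_filter fun i hi => measurableSet_le (hv i hi) measurable_const)

lemma measurable_sampleRank (hv : ∀ i ∈ s, Measurable (v i)) {j : ℕ} (hj : Measurable (v j)) :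
    Measurable fun a => sampleRank s (fun i => v i a) j :=
  measurable_card_filter fun i hi => measurableSet_lt (hv i hi) hj

end Measurability

lemma measurable_piFinset_orderStat {s : Finset ℕ} {k : ℕ} (hk : 1 ≤ k) (hks : k ≤ #s) :
    Measurable[Filtration.piFinset s] fun y : ℕ → ℝ => orderStat s y k := by
  have hrestrict : Measurable[Filtration.piFinset s] (s.restrict : (ℕ → ℝ) → s → ℝ) :=
    Measurable.of_comap_le le_rfl
  exact @measurable_orderStat _ (Filtration.piFinset s) s _ k hk hks fun i hi =>
    by exact (measurable_pi_apply (⟨i, hi⟩ : s)).comp hrestrict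

lemma ProbabilityTheory.IndepFun.lintegral_comp_eq_lintegral_lintegral {Ω α β : Type*}
    [MeasurableSpace Ω] [MeasurableSpace α] [MeasurableSpace β] {P : Measure Ω}
    [IsFiniteMeasure P] {A : Ω → α} {B : Ω → β} (hAB : IndepFun A B P) (hA : Measurable A)
    (hB : Measurable B) {H : α → β → ℝ≥0∞} (hH : Measurable (Function.uncurry H)) :
    ∫⁻ ω, H (A ω) (B ω) ∂P = ∫⁻ ω, ∫⁻ b, H (A ω) b ∂(P.map B) ∂P := by
  calc ∫⁻ ω, H (A ω) (B ω) ∂P = ∫⁻ p, Function.uncurry H p ∂(P.map fun ω => (A ω, B ω)) :=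
        (lintegral_map hH (hA.prodMk hB)).symm
    _ = ∫⁻ a, ∫⁻ b, H a b ∂(P.map B) ∂(P.map A) := by
        rw [(indepFun_iff_map_prod_eq_prod_map_map hA.aemeasurable hB.aemeasurable).1 hAB,
          lintegral_prod _ hH.aemeasurable]
        rfl
    _ = ∫⁻ ω, ∫⁻ b, H (A ω) b ∂(P.map B) ∂P := lintegral_map hH.lintegral_prod_right' hA

lemma ProbabilityTheory.indepFun_eval_infinitePi_of_measurable_piFinset {ι : Type*}
    {X : ι → Type*} [∀ i, MeasurableSpace (X i)] {μ : ∀ i, Measure (X i)}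
    [∀ i, IsProbabilityMeasure (μ i)] {β : Type*} [MeasurableSpace β] {s : Finset ι} {j : ι}
    (hj : j ∉ s) {f : (∀ i, X i) → β} (hf : Measurable[Filtration.piFinset s] f) :
    IndepFun f (fun y => y j) (Measure.infinitePi μ) := by
  have hindep := (iIndepFun_infinitePi (P := μ) (X := fun i (x : X i) => x)
    fun _ => measurable_id).indepFun_finset s {j} (disjoint_singleton_right.2 hj)
    fun i => measurable_pi_apply i
  refine indep_of_indep_of_le hindep hf.comap_le (Measurable.comap_le ?_)
  exact (measurable_pi_apply (X := fun i : ({j} : Finset ι) => X i)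
    ⟨j, mem_singleton_self j⟩).comp (Measurable.of_comap_le le_rfl)

lemma MeasureTheory.measurePreserving_comp_equiv_infinitePi {ι α : Type*} [MeasurableSpace α]
    (ν : Measure α) [IsProbabilityMeasure ν] (e : ι ≃ ι) :
    MeasurePreserving (fun y : ι → α => y ∘ e) (Measure.infinitePi fun _ => ν)
      (Measure.infinitePi fun _ => ν) := by
  refine ⟨measurable_pi_lambda _ fun i => measurable_pi_apply (e i), ?_⟩
  have := Measure.infinitePi_map_piCongrLeft (X := fun _ : ι => α) (μ := fun _ : ι => ν) e.symm
  convert this using 2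
  ext y i
  conv_rhs => rw [← e.symm_apply_apply i]
  rw [MeasurableEquiv.coe_piCongrLeft, Equiv.piCongrLeft_apply_apply]
  rfl

lemma MeasureTheory.ae_injective_infinitePi {ι α : Type*} [Countable ι] [MeasurableSpace α]
    [MeasurableEq α] (ν : Measure α) [IsProbabilityMeasure ν] [NullSingletonClass ν] :
    ∀ᵐ y ∂(Measure.infinitePi fun _ : ι => ν), Function.Injective y := by
  simp only [Function.injective_iff_pairwise_ne, Pairwise, ae_all_iff,
    Filter.eventually_imp_distrib_left]
  intro i i' hii'
  rw [ae_iff, show {y : ι → α | ¬y i ≠ y i'} = (fun y => (y i, y i')) ⁻¹' Set.diagonal α by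
      ext; simp [Set.diagonal],
    ← Measure.map_apply (by fun_prop) measurableSet_diagonal,
    Measure.infinitePi_map_eval_prod hii', Measure.prod_apply measurableSet_diagonal]
  simp [Set.preimage, Set.diagonal]

lemma integral_comp_eq_toReal_lintegral_map {Ω β : Type*} [MeasurableSpace Ω]
    [MeasurableSpace β] {P : Measure Ω} {Y : Ω → β} (hY : Measurable Y) {f : β → ℝ}
    (hf : Measurable f) (hf_nonneg : ∀ ω, 0 ≤ f (Y ω)) :
    ∫ ω, f (Y ω) ∂P = (∫⁻ b, ENNReal.ofReal (f b) ∂P.map Y).toReal := by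
  rw [lintegral_map hf.ennreal_ofReal hY,
    integral_eq_lintegral_of_nonneg_ae (ae_of_all _ hf_nonneg) (hf.comp hY).aestronglyMeasurable]

lemma nullSingletonClass_map_norm_sub {E : Type*} [NormedAddCommGroup E] [NormedSpace ℝ E]
    [MeasurableSpace E] [BorelSpace E] [FiniteDimensional ℝ E] [Nontrivial E] {μ ρ : Measure E}
    [ρ.IsAddHaarMeasure] (hμ : μ ≪ ρ) (x : E) :
    NullSingletonClass (μ.map fun z => ‖z - x‖) where
  measure_singleton a := by
    rw [Measure.map_apply (by fun_prop) (measurableSet_singleton a),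
      show (fun z => ‖z - x‖) ⁻¹' {a} = Metric.sphere x a by ext; simp]
    exact hμ (Measure.addHaar_sphere ρ x a)

lemma map_fun_comp_eq_infinitePi {Ω E β : Type*} [MeasurableSpace Ω] [MeasurableSpace E]
    [MeasurableSpace β] {P : Measure Ω} {X : ℕ → Ω → E} {μ : Measure E}
    (hX : ∀ i, Measurable (X i)) (hlaw : ∀ i, P.map (X i) = μ) (hindep : iIndepFun X P)
    {φ : E → β} (hφ : Measurable φ) :
    P.map (fun ω i => φ (X i ω)) = Measure.infinitePi fun _ => μ.map φ := by
  refine ((hindep.comp _ fun _ => hφ).map_fun_eq_infinitePi_map fun i => hφ.comp (hX i)).trans ?_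
  congr with i : 1
  rw [← Measure.map_map hφ (hX i), hlaw i]

section IIDSample

variable (ν : Measure ℝ) [IsProbabilityMeasure ν] [NullSingletonClass ν]

local notation "π" => Measure.infinitePi fun _ : ℕ => ν

lemma lintegral_ite_sampleRank_lt {t : Finset ℕ} {j k : ℕ} (hj : j ∈ t) (hkt : k ≤ #t)
    {Φ : (ℕ → ℝ) → ℝ≥0∞} (hΦ : Measurable Φ)
    (hΦ_perm : ∀ e : ℕ ≃ ℕ, (∀ i, e i ∈ t ↔ i ∈ t) → ∀ y, Φ (y ∘ e) = Φ y) :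
    #t * ∫⁻ y, (if sampleRank t y j < k then Φ y else 0) ∂π = k * ∫⁻ y, Φ y ∂π := by
  have hmeas : ∀ i, Measurable fun y : ℕ → ℝ => if sampleRank t y i < k then Φ y else 0 :=
    fun i => Measurable.ite (measurableSet_lt (measurable_sampleRank (fun l _ =>
      measurable_pi_apply l) (measurable_pi_apply i)) measurable_const) hΦ measurable_const
  have hexch : ∀ i ∈ t, ∫⁻ y, (if sampleRank t y i < k then Φ y else 0) ∂π
      = ∫⁻ y, (if sampleRank t y j < k then Φ y else 0) ∂π := by
    intro i hi
    have he : ∀ l, Equiv.swap i j l ∈ t ↔ l ∈ t := by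
      intro l
      rw [Equiv.swap_apply_def]
      split_ifs <;> simp_all
    rw [← (measurePreserving_comp_equiv_infinitePi ν (Equiv.swap i j)).lintegral_comp (hmeas j)]
    simp only [sampleRank_comp_equiv he, Equiv.swap_apply_right, hΦ_perm _ he]
  have hcount : ∀ᵐ y ∂π, ∑ i ∈ t, (if sampleRank t y i < k then Φ y else 0) = k * Φ y := by
    filter_upwards [ae_injective_infinitePi (ι := ℕ) ν] with y hy
    rw [← sum_filter, sum_const, card_filter_sampleRank_lt hy.injOn hkt, nsmul_eq_mul]
  calc #t * ∫⁻ y, (if sampleRank t y j < k then Φ y else 0) ∂π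
      = ∑ i ∈ t, ∫⁻ y, (if sampleRank t y i < k then Φ y else 0) ∂π := by
        rw [sum_congr rfl hexch, sum_const, nsmul_eq_mul]
    _ = ∫⁻ y, k * Φ y ∂π := by
        rw [← lintegral_finsetSum _ fun i _ => hmeas i, lintegral_congr_ae hcount]
    _ = k * ∫⁻ y, Φ y ∂π := lintegral_const_mul _ hΦ

theorem lintegral_mul_measure_Iic_orderStat {s : Finset ℕ} {j k : ℕ} (hj : j ∉ s) (hk : 1 ≤ k)
    (hks : k ≤ #s) {h : ℝ → ℝ≥0∞} (hh : Measurable h) :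
    (#s + 1) * ∫⁻ y, h (orderStat s y k) * ν (Set.Iic (orderStat s y k)) ∂π
      = k * ∫⁻ y, h (orderStat (insert j s) y (k + 1)) ∂π := by
  have hg := measurable_piFinset_orderStat hk hks
  have hindep := indepFun_eval_infinitePi_of_measurable_piFinset (μ := fun _ => ν) hj hg
  have hfubini : ∫⁻ y, h (orderStat s y k) * ν (Set.Iic (orderStat s y k)) ∂π
      = ∫⁻ y, (if y j ≤ orderStat s y k then h (orderStat s y k) else 0) ∂π := by
    rw [hindep.lintegral_comp_eq_lintegral_lintegral
      (hg.mono ((Filtration.piFinset (X := fun _ : ℕ => ℝ)).le s) le_rfl) (measurable_pi_apply j)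
      (H := fun a b => if b ≤ a then h a else 0)
      (Measurable.ite (measurableSet_le measurable_snd measurable_fst) (hh.comp measurable_fst)
        measurable_const), Measure.infinitePi_map_eval]
    refine lintegral_congr fun y => ?_
    rw [← lintegral_indicator_const measurableSet_Iic]
    simp only [Set.indicator_apply, Set.mem_Iic]
  have hevent : ∀ y : ℕ → ℝ, (if y j ≤ orderStat s y k then h (orderStat s y k) else 0)
      = if sampleRank (insert j s) y j < k then h (orderStat (insert j s) y (k + 1)) else 0 := by
    intro y
    have hiff : y j ≤ orderStat s y k ↔ sampleRank (insert j s) y j < k := by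
      rw [le_orderStat_iff hk hks, sampleRank, filter_insert, if_neg (lt_irrefl _)]
    by_cases hy : y j ≤ orderStat s y k
    · rw [if_pos hy, if_pos (hiff.1 hy), orderStat_insert hj hk hks hy]
    · rw [if_neg hy, if_neg (mt hiff.2 hy)]
  rw [hfubini, lintegral_congr hevent, ← Nat.cast_one, ← Nat.cast_add, ← card_insert_of_notMem hj]
  refine lintegral_ite_sampleRank_lt ν (mem_insert_self j s) ?_ ?_ fun e he y => ?_
  · rw [card_insert_of_notMem hj]; omega
  · exact hh.comp (measurable_orderStat (by omega) (by rw [card_insert_of_notMem hj]; omega)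
      fun i _ => measurable_pi_apply i)
  · rw [orderStat_comp_equiv he]

end IIDSample

theorem integral_orderStat_mul_cdf {Ω : Type*} [MeasurableSpace Ω] {P : Measure Ω}
    {ν : Measure ℝ} [IsProbabilityMeasure ν] [NullSingletonClass ν] {Y : ℕ → Ω → ℝ}
    (hY : ∀ i, Measurable (Y i)) (hlaw : P.map (fun ω i => Y i ω) = Measure.infinitePi fun _ => ν)
    (hY_nonneg : ∀ i ω, 0 ≤ Y i ω) {s : Finset ℕ} {j k : ℕ} (hj : j ∉ s) (hk : 1 ≤ k)
    (hks : k ≤ #s) :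
    ∫ ω, orderStat s (fun i => Y i ω) k * cdf ν (orderStat s (fun i => Y i ω) k) ∂P
      = k / (#s + 1) * ∫ ω, orderStat (insert j s) (fun i => Y i ω) (k + 1) ∂P := by
  have hks' : k + 1 ≤ #(insert j s) := by rw [card_insert_of_notMem hj]; omega
  have hg : Measurable fun y : ℕ → ℝ => orderStat s y k :=
    measurable_orderStat hk hks fun i _ => measurable_pi_apply i
  have hG : Measurable fun y : ℕ → ℝ => orderStat (insert j s) y (k + 1) :=
    measurable_orderStat (by omega) hks' fun i _ => measurable_pi_apply i
  have hYvec : Measurable fun ω i => Y i ω := measurable_pi_lambda _ hY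
  have hL := integral_comp_eq_toReal_lintegral_map (P := P) hYvec
    (f := fun y => orderStat s y k * cdf ν (orderStat s y k))
    (hg.mul ((cdf ν).mono.measurable.comp hg)) fun ω =>
      mul_nonneg (orderStat_nonneg hk hks fun i _ => hY_nonneg i ω) (cdf_nonneg _ _)
  have hR := integral_comp_eq_toReal_lintegral_map (P := P) hYvec hG fun ω =>
    orderStat_nonneg (by omega) hks' fun i _ => hY_nonneg i ω
  have key := congrArg ENNReal.toReal <|
    lintegral_mul_measure_Iic_orderStat ν hj hk hks ENNReal.measurable_ofReal
  simp only [ENNReal.toReal_mul, ENNReal.toReal_add (ENNReal.natCast_ne_top _) ENNReal.one_ne_top,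
    ENNReal.toReal_natCast, ENNReal.toReal_one] at key
  simp only [hlaw, ENNReal.ofReal_mul' (cdf_nonneg _ _), ofReal_cdf] at hL hR
  rw [hL, hR]
  field_simp
  linarith

theorem orderStat_cdf_identity_general
    {Ω : Type*} [MeasurableSpace Ω] (P : Measure Ω)
    (d n k : ℕ) (hk : 1 ≤ k) (hkn : k ≤ n)
    (Xs : ℕ → Ω → EuclideanSpace ℝ (Fin d))
    (μ : Measure (EuclideanSpace ℝ (Fin d))) [IsProbabilityMeasure μ]
    (hXsmeas : ∀ i, Measurable (Xs i))
    (hlawXs : ∀ i, Measure.map (Xs i) P = μ)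
    (hindep : iIndepFun Xs P)
    (hdensity : μ ≪ MeasureTheory.volume)
    (x : EuclideanSpace ℝ (Fin d))
    (F : ℝ → ℝ) (hF : ∀ t, F t = (μ {z | ‖z - x‖ ≤ t}).toReal) :
    ∫ ω, orderStat (Finset.Icc 1 n) (fun i => ‖Xs i ω - x‖) k
        * F (orderStat (Finset.Icc 1 n) (fun i => ‖Xs i ω - x‖) k) ∂P
      = ((k : ℝ) / ((n : ℝ) + 1))
        * ∫ ω, orderStat (Finset.Icc 1 (n + 1)) (fun i => ‖Xs i ω - x‖) (k + 1) ∂P := by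
  have hcard : #(Icc 1 n) = n := by simp
  rcases Nat.eq_zero_or_pos d with rfl | hd
  · have hzero : ∀ ω i, ‖Xs i ω - x‖ = 0 := fun ω i => by
      rw [Subsingleton.elim (Xs i ω - x) 0, norm_zero]
    simp only [hzero, orderStat_const (s := Icc 1 n) 0 hk (by rw [hcard]; exact hkn),
      orderStat_const (s := Icc 1 (n + 1)) (k := k + 1) 0 (by omega) (by simpa), zero_mul,
      integral_zero, mul_zero]
  have : Nonempty (Fin d) := ⟨⟨0, hd⟩⟩
  have hdist : Measurable fun z : EuclideanSpace ℝ (Fin d) => ‖z - x‖ := by fun_prop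
  set ν := μ.map fun z => ‖z - x‖
  have : IsProbabilityMeasure ν := Measure.isProbabilityMeasure_map hdist.aemeasurable
  have : NullSingletonClass ν := nullSingletonClass_map_norm_sub hdensity x
  have hF_cdf : F = cdf ν := funext fun t => by
    rw [hF, cdf_eq_real, measureReal_def, Measure.map_apply hdist measurableSet_Iic]
    rfl
  have h := integral_orderStat_mul_cdf (fun i => hdist.comp (hXsmeas i))
    (map_fun_comp_eq_infinitePi hXsmeas hlawXs hindep hdist) (fun i ω => norm_nonneg _)
    (s := Icc 1 n) (j := n + 1) (by simp) hk (by rwa [hcard])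
  rwa [hcard, insert_Icc_right_eq_Icc_add_one (by omega), ← hF_cdf] at h

/-- **An order-statistic identity.** If `X, X₁, …, X_{n+1}` are i.i.d. with a density,
`x ∈ ℝ^d` and `1 ≤ k ≤ n`, then
`E(‖X-x‖_{(k,n)} F_{‖X-x‖}(‖X-x‖_{(k,n)})) = (k/(n+1)) E(‖X-x‖_{(k+1,n+1)})`,
where `‖X-x‖_{(k,m)}` is the `k`-th order statistic of a sample of size `m` of `‖X-x‖`. -/
theorem orderStat_cdf_identity
    {Ω : Type*} [MeasurableSpace Ω] (P : Measure Ω) [IsProbabilityMeasure P]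
    (d n k : ℕ) (hk : 1 ≤ k) (hkn : k ≤ n)
    (Xs : ℕ → Ω → EuclideanSpace ℝ (Fin d))
    (μ : Measure (EuclideanSpace ℝ (Fin d))) [IsProbabilityMeasure μ]
    (hXsmeas : ∀ i, Measurable (Xs i))
    (hlawXs : ∀ i, Measure.map (Xs i) P = μ)
    (hindep : iIndepFun Xs P)
    (hdensity : μ ≪ MeasureTheory.volume)
    (x : EuclideanSpace ℝ (Fin d))
    (F : ℝ → ℝ) (hF : ∀ t, F t = (μ {z | ‖z - x‖ ≤ t}).toReal) :
    ∫ ω, orderStat (Finset.Icc 1 n) (fun i => ‖Xs i ω - x‖) k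
        * F (orderStat (Finset.Icc 1 n) (fun i => ‖Xs i ω - x‖) k) ∂P
      = ((k : ℝ) / ((n : ℝ) + 1))
        * ∫ ω, orderStat (Finset.Icc 1 (n + 1)) (fun i => ‖Xs i ω - x‖) (k + 1) ∂P :=
  orderStat_cdf_identity_general P d n k hk hkn Xs μ hXsmeas hlawXs hindep hdensity x F hF
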